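/- There exists ε₀ ≥ 0 such that for all ε ≥ ε₀ and all nodes x, y joined by a directed path in G, every directed path from x to y that minimizes the ε-total delay has the minimum possible number of edges among all directed paths from x to y; that is, as the per-node delay grows, minimum-delay paths are exactly paths of minimum hop-count. -/

import Mathlib

/-!
Fix, for every pair of nodes joined by a path, one path with the fewest edges, and let `ε₀`
bound the (finitely many) delays of these paths. If an `ε`-optimal path `p` from `x` to `y`
had more edges than the fixed path `r`, optimality would give
`ε ≤ ε · (hops p − hops r) ≤ delay r − delay p < delay r ≤ ε₀`, since `delay p > 0`.
-/

/-- A directed path (with at least one edge) from `x` to `y` in the directed graph with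
edge relation `E`, represented as the list of its vertices. -/
def IsDipath {V : Type*} (E : V → V → Prop) (x y : V) (p : List V) : Prop :=
  2 ≤ p.length ∧ p.head? = some x ∧ p.getLast? = some y ∧ p.Chain' E

/-- The sum of the delays `δ` of the edges of a path. -/
noncomputable def pathDelay {V : Type*} (δ : V → V → ℝ) (p : List V) : ℝ :=
  ((p.zip p.tail).map fun q => δ q.1 q.2).sum

/-- The `ε`-total delay of a directed path with `k` edges (so `k + 1` vertices): the sum of
the delays of its edges plus `ε · (k − 1)`, i.e. an additional delay `ε` at each
intermediate node of the path. -/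
noncomputable def epsTotalDelay {V : Type*} (δ : V → V → ℝ) (ε : ℝ) (p : List V) : ℝ :=
  pathDelay δ p + ε * ((p.length - 2 : ℕ) : ℝ)

theorem Finite.exists_bound_of_forall_exists {ι α β : Type*} [Finite ι] [Nonempty β]
    [Preorder β] [IsDirectedOrder β] (P : ι → α → Prop) (g : α → β) :
    ∃ B, ∀ i, (∃ a, P i a) → ∃ a, P i a ∧ g a ≤ B := by
  classical
  obtain ⟨B, hB⟩ := Finite.exists_le fun i =>
    if h : ∃ a, P i a then g h.choose else Classical.arbitrary β
  refine ⟨B, fun i h => ⟨h.choose, h.choose_spec, ?_⟩⟩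
  simpa [h] using hB i

section Dipath

variable {V : Type*} {E : V → V → Prop}

def IsMinHopDipath (E : V → V → Prop) (x y : V) (p : List V) : Prop :=
  IsDipath E x y p ∧ ∀ q, IsDipath E x y q → p.length ≤ q.length

theorem exists_isMinHopDipath {x y : V} (h : ∃ p, IsDipath E x y p) :
    ∃ p, IsMinHopDipath E x y p := by
  obtain ⟨p, hp, hmin⟩ := (measure List.length).wf.has_min {q | IsDipath E x y q} h
  exact ⟨p, hp, fun q hq => not_lt.1 (hmin q hq)⟩

@[simp]
theorem pathDelay_cons_cons (δ : V → V → ℝ) (a b : V) (l : List V) :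
    pathDelay δ (a :: b :: l) = δ a b + pathDelay δ (b :: l) := by
  simp [pathDelay]

theorem pathDelay_nonneg {δ : V → V → ℝ} (hδ : ∀ a b, E a b → 0 ≤ δ a b) {p : List V}
    (hp : p.IsChain E) : 0 ≤ pathDelay δ p := by
  induction p with
  | nil => simp [pathDelay]
  | cons a l ih =>
    match l, hp with
    | [], _ => simp [pathDelay]
    | b :: l, hp =>
      obtain ⟨hab, hrest⟩ := List.isChain_cons_cons.1 hp
      rw [pathDelay_cons_cons]
      exact add_nonneg (hδ a b hab) (ih hrest)

theorem IsDipath.pathDelay_pos {δ : V → V → ℝ} (hδ : ∀ a b, E a b → 0 < δ a b) {x y : V}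
    {p : List V} (hp : IsDipath E x y p) : 0 < pathDelay δ p := by
  obtain ⟨hlen, -, -, hchain⟩ := hp
  match p, hlen, hchain with
  | a :: b :: l, _, hchain =>
    obtain ⟨hab, hrest⟩ := List.isChain_cons_cons.1 hchain
    rw [pathDelay_cons_cons]
    exact add_pos_of_pos_of_nonneg (hδ a b hab)
      (pathDelay_nonneg (fun a b h => (hδ a b h).le) hrest)

end Dipath

theorem length_le_of_epsTotalDelay_le {V : Type*} {δ : V → V → ℝ} {ε : ℝ} {p q : List V}
    (hp : 2 ≤ p.length) (hq : 2 ≤ q.length) (hε : 0 ≤ ε)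
    (hgap : pathDelay δ q - pathDelay δ p < ε)
    (h : epsTotalDelay δ ε p ≤ epsTotalDelay δ ε q) : p.length ≤ q.length := by
  by_contra! hlt
  have hhop : (q.length : ℝ) + 1 ≤ p.length := by exact_mod_cast hlt
  have hgain : ε ≤ ε * (p.length - q.length) := le_mul_of_one_le_right hε (by linarith)
  simp only [epsTotalDelay, Nat.cast_sub hp, Nat.cast_sub hq, Nat.cast_ofNat] at h
  linarith

/-- There exists `ε₀ ≥ 0` such that for all `ε ≥ ε₀` and all nodes `x, y` joined by a
directed path in `G`, every directed path from `x` to `y` minimizing the `ε`-total delay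
has the minimum possible number of edges among all directed paths from `x` to `y` (for
paths given by their vertex lists, minimizing the number of edges is minimizing the list
length): as the per-node delay grows, minimum-delay paths are paths of minimum hop-count. -/
theorem min_eps_delay_paths_eventually_min_hop {V : Type*} [Fintype V]
    (E : V → V → Prop) (δ : V → V → ℝ) (hδ : ∀ a b, E a b → 0 < δ a b) :
    ∃ ε₀ : ℝ, 0 ≤ ε₀ ∧ ∀ ε : ℝ, ε₀ ≤ ε → ∀ x y : V, (∃ p, IsDipath E x y p) →
      ∀ p, IsDipath E x y p →
        (∀ q, IsDipath E x y q → epsTotalDelay δ ε p ≤ epsTotalDelay δ ε q) →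
        ∀ q, IsDipath E x y q → p.length ≤ q.length := by
  obtain ⟨B, hB⟩ := Finite.exists_bound_of_forall_exists
    (fun xy : V × V => IsMinHopDipath E xy.1 xy.2) (pathDelay δ)
  refine ⟨max B 0, le_max_right B 0, fun ε hε x y hxy p hp hpmin q hq => ?_⟩
  obtain ⟨r, ⟨hr, hrmin⟩, hrB⟩ := hB (x, y) (exists_isMinHopDipath hxy)
  calc p.length ≤ r.length :=
        length_le_of_epsTotalDelay_le hp.1 hr.1 ((le_max_right B 0).trans hε)
          (by linarith [hp.pathDelay_pos hδ, le_max_left B 0]) (hpmin r hr)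
    _ ≤ q.length := hrmin q hq
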